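/- arXiv:1912.10041 — 2 statements merged into one kernel-verified Lean document; each statement's English description precedes it below -/
import Mathlib

section
/- In any meadow (a commutative ring with multiplicative identity and a total multiplicative inverse operation satisfying (x⁻¹)⁻¹ = x and x·(x·x⁻¹) = x), the multiplicative inverse of zero is zero: 0⁻¹ = 0. -/
/-- A meadow: a commutative ring with multiplicative identity and a total
multiplicative inverse operation satisfying `(x⁻¹)⁻¹ = x` and `x·(x·x⁻¹) = x`. -/
class Meadow (M : Type*) extends Zero M, One M, Add M, Mul M, Neg M, Inv M where
  add_assoc : ∀ x y z : M, x + y + z = x + (y + z)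
  add_comm : ∀ x y : M, x + y = y + x
  add_zero : ∀ x : M, x + 0 = x
  add_neg : ∀ x : M, x + -x = 0
  mul_assoc : ∀ x y z : M, x * y * z = x * (y * z)
  mul_comm : ∀ x y : M, x * y = y * x
  mul_one : ∀ x : M, x * 1 = x
  mul_add : ∀ x y z : M, x * (y + z) = x * y + x * z
  inv_inv : ∀ x : M, x⁻¹⁻¹ = x
  mul_mul_inv : ∀ x : M, x * (x * x⁻¹) = x

namespace Meadow

variable {M : Type*} [Meadow M]

theorem eq_zero_of_add_self_eq_self {a : M} (h : a + a = a) : a = 0 :=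
  calc a = a + 0 := (add_zero a).symm
    _ = a + (a + -a) := by rw [add_neg]
    _ = a + a + -a := (add_assoc a a (-a)).symm
    _ = 0 := by rw [h, add_neg]

theorem mul_zero (x : M) : x * 0 = 0 :=
  eq_zero_of_add_self_eq_self (by rw [← mul_add, add_zero])

end Meadow

/-- In any meadow, the multiplicative inverse of zero is zero. -/
theorem meadow_inv_zero (M : Type*) [Meadow M] : (0 : M)⁻¹ = 0 :=
  calc (0 : M)⁻¹ = 0⁻¹ * (0⁻¹ * 0⁻¹⁻¹) := (Meadow.mul_mul_inv _).symm
    _ = 0 := by rw [Meadow.inv_inv, Meadow.mul_zero, Meadow.mul_zero]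
end

section
/- P is multiplicative over alternative composition: P(t + t', T + T') = P(t,T) · P(t',T'), where T + T' = {u + u' : u ∈ T, u' ∈ T'}, for all closed pACPr terms t, t' and sets T, T' of closed pACPr terms. -/
/-- Terms of pACPr over a set `A` of actions: action constants and the inaction
constant `δ` (`cst none`), alternative composition `alt`, sequential
composition `seqc`, probabilistic choice `pch π`, parallel composition `par`,
left merge `lmerge`, communication merge `cmerge`, encapsulation `enc H`, and
constants `fix k E` standing for the solution `⟨X_k | E⟩` of a (possibly
countably infinite) recursive specification `E` for its variable `X_k`.
Variables are indexed by natural numbers. -/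
inductive Tm (A : Type) : Type
  | var : ℕ → Tm A
  | cst : Option A → Tm A
  | alt : Tm A → Tm A → Tm A
  | seqc : Tm A → Tm A → Tm A
  | pch : ℝ → Tm A → Tm A → Tm A
  | par : Tm A → Tm A → Tm A
  | lmerge : Tm A → Tm A → Tm A
  | cmerge : Tm A → Tm A → Tm A
  | enc : Set A → Tm A → Tm A
  | fix : ℕ → (ℕ → Tm A) → Tm A

namespace Tm

variable {A : Type}

/-- `mkrec E t` is `⟨t | E⟩`: `t` with every variable `X_n` replaced by the
constant `⟨X_n | E⟩`. -/
def mkrec (E : ℕ → Tm A) : Tm A → Tm A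
  | var n => fix n E
  | cst a => cst a
  | alt t u => alt (mkrec E t) (mkrec E u)
  | seqc t u => seqc (mkrec E t) (mkrec E u)
  | pch p t u => pch p (mkrec E t) (mkrec E u)
  | par t u => par (mkrec E t) (mkrec E u)
  | lmerge t u => lmerge (mkrec E t) (mkrec E u)
  | cmerge t u => cmerge (mkrec E t) (mkrec E u)
  | enc H t => enc H (mkrec E t)
  | fix k F => fix k F

/-- Whether a term is an action constant. -/
def isActB : Tm A → Bool
  | cst (some _) => true
  | _ => false

/-- Well-formedness `Ok v g t`: `v` records whether (guarded) variable
occurrences are allowed (i.e. whether we are inside the body of a recursive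
specification), `g` records whether we are under an action guard `a · _`.
Probabilities of probabilistic choices must lie in `[0,1]`, and the bodies of
recursive specifications must be guarded (every variable occurrence inside a
subterm `a · t'`). -/
def Ok : Bool → Bool → Tm A → Prop
  | v, g, var _ => v = true ∧ g = true
  | _, _, cst _ => True
  | v, g, alt t u => Ok v g t ∧ Ok v g u
  | v, g, seqc t u => Ok v g t ∧ Ok v (g || isActB t) u
  | v, g, pch p t u => 0 ≤ p ∧ p ≤ 1 ∧ Ok v g t ∧ Ok v g u
  | v, g, par t u => Ok v g t ∧ Ok v g u
  | v, g, lmerge t u => Ok v g t ∧ Ok v g u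
  | v, g, cmerge t u => Ok v g t ∧ Ok v g u
  | v, g, enc _ t => Ok v g t
  | _, _, fix _ E => ∀ i, Ok true false (E i)

/-- Closed pACPr terms: no free variables (and all recursive specifications
guarded, all probabilities in `[0,1]`). -/
def Closed (t : Tm A) : Prop := Ok false false t

/-- The positive rules for the probabilistic transition relations `⇝π` of the
structural operational semantics of pACPr. -/
inductive PStepP : Tm A → ℝ → Tm A → Prop
  | cst (a : Option A) : PStepP (cst a) 1 (cst a)
  | alt {x x' y y' : Tm A} {p q : ℝ} :
      PStepP x p x' → PStepP y q y' → PStepP (alt x y) (p * q) (alt x' y')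
  | seqc {x x' : Tm A} {p : ℝ} (y : Tm A) :
      PStepP x p x' → PStepP (seqc x y) p (seqc x' y)
  | pch {x y z : Tm A} {q q' : ℝ} (p : ℝ) :
      PStepP x q z → PStepP y q' z →
      PStepP (pch p x y) (p * q + (1 - p) * q') z
  | par {x x' y y' : Tm A} {p q : ℝ} :
      PStepP x p x' → PStepP y q y' → PStepP (par x y) (p * q) (par x' y')
  | lmerge {x x' y y' : Tm A} {p q : ℝ} :
      PStepP x p x' → PStepP y q y' →
      PStepP (lmerge x y) (p * q) (lmerge x' y')
  | cmerge {x x' y y' : Tm A} {p q : ℝ} :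
      PStepP x p x' → PStepP y q y' →
      PStepP (cmerge x y) (p * q) (cmerge x' y')
  | enc {x x' : Tm A} {p : ℝ} (H : Set A) :
      PStepP x p x' → PStepP (enc H x) p (enc H x')
  | fix {E : ℕ → Tm A} {k : ℕ} {p : ℝ} {z : Tm A} :
      PStepP (mkrec E (E k)) p z → PStepP (fix k E) p z

/-- The probabilistic transition relations `⇝π` of pACPr: the positive rules,
together with the closing rule assigning probability `0` to every pair that
admits no transition with a probability different from `0`. -/
def PStep (t : Tm A) (p : ℝ) (t' : Tm A) : Prop :=
  PStepP t p t' ∨ (p = 0 ∧ ∀ q : ℝ, q ≠ 0 → ¬ PStepP t q t')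

end Tm

namespace Tm

variable {A : Type}

/-- The probability distribution function `P` induced by the probabilistic
transition relations: `P(t,t') = Σ {π : t ⇝π t'}` (the sum of the set
`Π(t,t')` of probabilities). -/
noncomputable def P (t t' : Tm A) : ℝ :=
  ∑' p : {q : ℝ // PStep t q t'}, (p : ℝ)

/-- `P(t,T) = Σ_{t' ∈ T} P(t,t')`. -/
noncomputable def PS (t : Tm A) (T : Set (Tm A)) : ℝ :=
  ∑' u : T, P t (u : Tm A)

end Tm

/-!
For each source and target exactly one `π` satisfies `t ⇝π t'` (the positive rules determine it,
and the closing rule supplies `0` when they give none), so `P(t,t')` is that `π`, and the rule for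
`+` gives `P(t + t', u + u') = P(t,u) · P(t',u')`. As `(u, u') ↦ u + u'` is injective,
`P(t + t', T + T')` is the sum of `P(t,u) · P(t',u')` over `T × T'`. Such a sum of a product
factors for arbitrary real functions: if both factors are summable, because real summability is
absolute; otherwise both sides are the junk value `0`, since a summable product with a nonzero
factor makes the other factor summable.
-/

section ProductSums

variable {𝕜 ι κ : Type*}

theorem Summable.of_prod_mul_left [RCLike 𝕜] {f : ι → 𝕜} {g : κ → 𝕜}
    (h : Summable fun z : ι × κ => f z.1 * g z.2) {j : κ} (hj : g j ≠ 0) : Summable f := by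
  have hslice : Summable fun i => f i * g j :=
    h.comp_injective (i := fun i => (i, j)) (Prod.mk_left_injective j)
  exact (summable_mul_right_iff hj).mp hslice

theorem Summable.of_prod_mul_right [RCLike 𝕜] {f : ι → 𝕜} {g : κ → 𝕜}
    (h : Summable fun z : ι × κ => f z.1 * g z.2) {i : ι} (hi : f i ≠ 0) : Summable g := by
  have hslice : Summable fun j => f i * g j :=
    h.comp_injective (i := Prod.mk i) (Prod.mk_right_injective i)
  exact (summable_mul_left_iff hi).mp hslice

theorem tsum_mul_tsum_eq_tsum_prod [RCLike 𝕜] (f : ι → 𝕜) (g : κ → 𝕜) :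
    (∑' i, f i) * ∑' j, g j = ∑' z : ι × κ, f z.1 * g z.2 := by
  by_cases hfg : Summable f ∧ Summable g
  · exact tsum_mul_tsum_of_summable_norm (summable_norm_iff.mpr hfg.1)
      (summable_norm_iff.mpr hfg.2)
  by_cases hzero : f = 0 ∨ g = 0
  · rcases hzero with rfl | rfl <;> simp
  obtain ⟨⟨i, hi⟩, ⟨j, hj⟩⟩ : (∃ i, f i ≠ 0) ∧ ∃ j, g j ≠ 0 := by
    simpa only [not_or, Function.ne_iff, Pi.zero_apply] using hzero
  have hprod : ¬ Summable fun z : ι × κ => f z.1 * g z.2 :=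
    fun h => hfg ⟨h.of_prod_mul_left hj, h.of_prod_mul_right hi⟩
  rw [tsum_eq_zero_of_not_summable hprod]
  rcases not_and_or.mp hfg with hf | hg
  · rw [tsum_eq_zero_of_not_summable hf, zero_mul]
  · rw [tsum_eq_zero_of_not_summable hg, mul_zero]

end ProductSums

namespace Tm

variable {A : Type}

theorem PStepP.prob_eq {t u : Tm A} {p q : ℝ} (hp : PStepP t p u) (hq : PStepP t q u) :
    p = q := by
  induction hp generalizing q with
  | cst => cases hq; rfl
  | alt _ _ ihx ihy => cases hq with | alt hx hy => rw [ihx hx, ihy hy]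
  | seqc _ _ ih => cases hq with | seqc _ hx => exact ih hx
  | pch _ _ _ ihx ihy => cases hq with | pch _ hx hy => rw [ihx hx, ihy hy]
  | par _ _ ihx ihy => cases hq with | par hx hy => rw [ihx hx, ihy hy]
  | lmerge _ _ ihx ihy => cases hq with | lmerge hx hy => rw [ihx hx, ihy hy]
  | cmerge _ _ ihx ihy => cases hq with | cmerge hx hy => rw [ihx hx, ihy hy]
  | enc _ _ ih => cases hq with | enc _ hx => exact ih hx
  | fix _ ih => cases hq with | fix hx => exact ih hx

theorem PStep.exists (t u : Tm A) : ∃ p, PStep t p u := by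
  by_cases h : ∃ p, PStepP t p u
  · obtain ⟨p, hp⟩ := h
    exact ⟨p, .inl hp⟩
  · exact ⟨0, .inr ⟨rfl, fun q _ hq => h ⟨q, hq⟩⟩⟩

theorem PStep.prob_eq {t u : Tm A} {p q : ℝ} (hp : PStep t p u) (hq : PStep t q u) : p = q := by
  rcases hp with hp | ⟨rfl, hp⟩ <;> rcases hq with hq | ⟨rfl, hq⟩
  · exact hp.prob_eq hq
  · by_contra hne
    exact hq p hne hp
  · by_contra hne
    exact hp q (Ne.symm hne) hq
  · rfl

theorem P_eq_of_pstep {t u : Tm A} {p : ℝ} (h : PStep t p u) : P t u = p :=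
  tsum_eq_single (⟨p, h⟩ : {q : ℝ // PStep t q u})
    fun q hq => absurd (Subtype.ext (q.2.prob_eq h)) hq

theorem PStep.alt {x x' y y' : Tm A} {p q : ℝ} (hx : PStep x p x') (hy : PStep y q y') :
    PStep (alt x y) (p * q) (alt x' y') := by
  rcases hx with hx | ⟨rfl, hx⟩
  · rcases hy with hy | ⟨rfl, hy⟩
    · exact .inl (.alt hx hy)
    · refine .inr ⟨mul_zero p, fun r hr hxy => ?_⟩
      cases hxy with
      | alt _ hy' => exact hy _ (right_ne_zero_of_mul hr) hy'
  · refine .inr ⟨zero_mul q, fun r hr hxy => ?_⟩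
    cases hxy with
    | alt hx' _ => exact hx _ (left_ne_zero_of_mul hr) hx'

theorem P_alt (t t' u u' : Tm A) : P (alt t t') (alt u u') = P t u * P t' u' := by
  obtain ⟨p, hp⟩ := PStep.exists t u
  obtain ⟨q, hq⟩ := PStep.exists t' u'
  rw [P_eq_of_pstep hp, P_eq_of_pstep hq, P_eq_of_pstep (hp.alt hq)]

theorem alt_injective_prod (T T' : Set (Tm A)) :
    Function.Injective fun p : T × T' => alt (p.1 : Tm A) p.2 := fun p q h => by
  obtain ⟨h1, h2⟩ := alt.inj h
  exact Prod.ext (Subtype.ext h1) (Subtype.ext h2)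

end Tm

open Tm in
theorem ps_alt_mul_general {A : Type} (t t' : Tm A) (T T' : Set (Tm A)) :
    PS (Tm.alt t t') {w : Tm A | ∃ u ∈ T, ∃ u' ∈ T', w = Tm.alt u u'} =
      PS t T * PS t' T' := by
  have hrange : {w : Tm A | ∃ u ∈ T, ∃ u' ∈ T', w = Tm.alt u u'} =
      Set.range fun p : T × T' => Tm.alt (p.1 : Tm A) p.2 := by
    ext w
    simp [eq_comm]
  rw [PS, PS, PS, hrange, tsum_range _ (alt_injective_prod T T'), tsum_mul_tsum_eq_tsum_prod]
  exact tsum_congr fun p => P_alt t t' p.1 p.2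

open Tm in
/-- `P` is multiplicative over alternative composition:
`P(t + t', T + T') = P(t,T) · P(t',T')`, where
`T + T' = {u + u' : u ∈ T, u' ∈ T'}`, for all closed pACPr terms `t`, `t'` and
sets `T`, `T'` of closed pACPr terms. -/
theorem ps_alt_mul {A : Type} (t t' : Tm A) (T T' : Set (Tm A))
    (ht : Closed t) (ht' : Closed t')
    (hT : ∀ u ∈ T, Closed u) (hT' : ∀ u ∈ T', Closed u) :
    PS (Tm.alt t t') {w : Tm A | ∃ u ∈ T, ∃ u' ∈ T', w = Tm.alt u u'} =
      PS t T * PS t' T' :=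
  ps_alt_mul_general t t' T T'
end
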